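/- Let $T : \mathcal{B}(X) \to \mathcal{B}(X)$ be a contraction with modulus $\alpha \in (0,1)$ and fixed point $J_T \in \mathcal{B}(X)$, and let $w_\ell : X \to [0,\infty)$ satisfy $\sum_{\ell=1}^\infty w_\ell(x) = 1$ for all $x$. Then the pointwise-defined operator $(T^{(w)} J)(x) = \sum_{\ell=1}^\infty w_\ell(x)(T^\ell J)(x)$ maps $\mathcal{B}(X)$ into $\mathcal{B}(X)$; moreover $|(T^{(w)} J)(x) - J_T(x)| \le \bar\alpha \|J - J_T\| v(x)$ for all $x$, where $\bar\alpha = \sup_{x \in X} \sum_{\ell=1}^\infty w_\ell(x) \alpha^\ell \le \alpha$. -/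

import Mathlib

/-! Peeling off the fixed point, `(T^{(w)} J)(x) - J_T(x) = ∑ₗ wₗ(x) ((Tˡ J)(x) - J_T(x))` because
the weights sum to one, and `|(Tˡ J)(x) - J_T(x)| ≤ αˡ ‖J - J_T‖ v(x)` by iterating the contraction
at the fixed point. Averaging these bounds with the weights gives the estimate, and `αˡ ≤ α`
gives `ᾱ ≤ α`. -/

open Filter Topology

noncomputable def wnorm {X : Type*} (v : X → ℝ) (J : X → ℝ) : ℝ := ⨆ x, |J x| / v x

def memB {X : Type*} (v : X → ℝ) (J : X → ℝ) : Prop := ∃ C : ℝ, ∀ x, |J x| / v x ≤ C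

section WeightedNorm

variable {X : Type*} {v : X → ℝ}

lemma wnorm_nonneg (hv : ∀ x, 0 ≤ v x) (f : X → ℝ) : 0 ≤ wnorm v f :=
  Real.iSup_nonneg fun x => div_nonneg (abs_nonneg _) (hv x)

lemma abs_le_wnorm_mul (hv : ∀ x, 0 < v x) {f : X → ℝ} (hf : memB v f) (x : X) :
    |f x| ≤ wnorm v f * v x := by
  obtain ⟨C, hC⟩ := hf
  rw [← div_le_iff₀ (hv x)]
  exact le_ciSup ⟨C, by rintro _ ⟨y, rfl⟩; exact hC y⟩ x

lemma memB.of_abs_sub_le (hv : ∀ x, 0 < v x) {f g : X → ℝ} (hg : memB v g) {K : ℝ}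
    (hfg : ∀ x, |f x - g x| ≤ K * v x) : memB v f := by
  obtain ⟨C, hC⟩ := hg
  refine ⟨K + C, fun x => ?_⟩
  have hgx : |g x| ≤ C * v x := (div_le_iff₀ (hv x)).1 (hC x)
  rw [div_le_iff₀ (hv x)]
  linarith [abs_sub_abs_le_abs_sub (f x) (g x), hfg x]

lemma memB.sub (hv : ∀ x, 0 < v x) {f g : X → ℝ} (hf : memB v f) (hg : memB v g) :
    memB v (fun x => f x - g x) := by
  obtain ⟨C, hC⟩ := hf
  obtain ⟨D, hD⟩ := hg
  refine ⟨C + D, fun x => ?_⟩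
  rw [div_le_iff₀ (hv x)]
  have hfx := (div_le_iff₀ (hv x)).1 (hC x)
  have hgx := (div_le_iff₀ (hv x)).1 (hD x)
  linarith [abs_sub (f x) (g x)]

end WeightedNorm

section Contraction

variable {X : Type*} {v : X → ℝ} {T : (X → ℝ) → (X → ℝ)} {α : ℝ} {J JT : X → ℝ}

lemma memB.iterate (hT : ∀ J, memB v J → memB v (T J)) (hJ : memB v J) (n : ℕ) :
    memB v (T^[n] J) := by
  induction n with
  | zero => exact hJ
  | succ n ih => rw [Function.iterate_succ_apply']; exact hT _ ih

lemma wnorm_iterate_sub_fixedPoint_le (hα : 0 ≤ α) (hT : ∀ J, memB v J → memB v (T J))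
    (hcontr : ∀ J J', memB v J → memB v J' →
      wnorm v (fun x => T J x - T J' x) ≤ α * wnorm v (fun x => J x - J' x))
    (hJT : memB v JT) (hfix : T JT = JT) (hJ : memB v J) (n : ℕ) :
    wnorm v (fun x => T^[n] J x - JT x) ≤ α ^ n * wnorm v (fun x => J x - JT x) := by
  induction n with
  | zero => simp
  | succ n ih =>
    calc wnorm v (fun x => T^[n + 1] J x - JT x)
        = wnorm v (fun x => T (T^[n] J) x - T JT x) := by
          simp only [Function.iterate_succ_apply', hfix]
      _ ≤ α * wnorm v (fun x => T^[n] J x - JT x) := hcontr _ _ (hJ.iterate hT n) hJT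
      _ ≤ α * (α ^ n * wnorm v (fun x => J x - JT x)) := mul_le_mul_of_nonneg_left ih hα
      _ = α ^ (n + 1) * wnorm v (fun x => J x - JT x) := by ring

lemma abs_iterate_sub_fixedPoint_le (hv : ∀ x, 0 < v x) (hα : 0 ≤ α)
    (hT : ∀ J, memB v J → memB v (T J))
    (hcontr : ∀ J J', memB v J → memB v J' →
      wnorm v (fun x => T J x - T J' x) ≤ α * wnorm v (fun x => J x - J' x))
    (hJT : memB v JT) (hfix : T JT = JT) (hJ : memB v J) (n : ℕ) (x : X) :
    |T^[n] J x - JT x| ≤ α ^ n * (wnorm v (fun y => J y - JT y) * v x) := by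
  calc |T^[n] J x - JT x| ≤ wnorm v (fun y => T^[n] J y - JT y) * v x :=
        abs_le_wnorm_mul hv ((hJ.iterate hT n).sub hv hJT) x
    _ ≤ α ^ n * wnorm v (fun y => J y - JT y) * v x := by
        gcongr
        · exact (hv x).le
        · exact wnorm_iterate_sub_fixedPoint_le hα hT hcontr hJT hfix hJ n
    _ = α ^ n * (wnorm v (fun y => J y - JT y) * v x) := by ring

end Contraction

section Weights

variable {ι : Type*} {w : ι → ℝ}

lemma abs_tsum_mul_sub_le (hw0 : ∀ i, 0 ≤ w i) (hw1 : HasSum w 1) {a β : ι → ℝ} {c : ℝ}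
    (hβ : Summable fun i => w i * β i) (ha : ∀ i, |a i - c| ≤ β i) :
    |(∑' i, w i * a i) - c| ≤ ∑' i, w i * β i := by
  have hterm : ∀ i, |w i * (a i - c)| ≤ w i * β i := fun i => by
    rw [abs_mul, abs_of_nonneg (hw0 i)]
    exact mul_le_mul_of_nonneg_left (ha i) (hw0 i)
  have hsum : Summable fun i => w i * (a i - c) :=
    Summable.of_norm_bounded hβ hterm
  have hsplit : (∑' i, w i * a i) - c = ∑' i, w i * (a i - c) := by
    have hwa : (fun i => w i * a i) = fun i => w i * c + w i * (a i - c) := by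
      funext i; ring
    rw [hwa, (hw1.mul_right c).summable.tsum_add hsum, (hw1.mul_right c).tsum_eq, one_mul,
      add_sub_cancel_left]
  rw [hsplit]
  calc |∑' i, w i * (a i - c)| ≤ ∑' i, |w i * (a i - c)| := by
        simpa only [Real.norm_eq_abs] using norm_tsum_le_tsum_norm hsum.norm
    _ ≤ ∑' i, w i * β i := Summable.tsum_le_tsum hterm hsum.abs hβ

lemma summable_mul_of_le (hw0 : ∀ i, 0 ≤ w i) (hw1 : HasSum w 1) {b : ι → ℝ} {α : ℝ}
    (hb0 : ∀ i, 0 ≤ b i) (hbα : ∀ i, b i ≤ α) : Summable fun i => w i * b i :=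
  (hw1.summable.mul_right α).of_nonneg_of_le (fun i => mul_nonneg (hw0 i) (hb0 i))
    fun i => mul_le_mul_of_nonneg_left (hbα i) (hw0 i)

lemma tsum_mul_le_of_le (hw0 : ∀ i, 0 ≤ w i) (hw1 : HasSum w 1) {b : ι → ℝ} {α : ℝ}
    (hb0 : ∀ i, 0 ≤ b i) (hbα : ∀ i, b i ≤ α) : ∑' i, w i * b i ≤ α :=
  calc ∑' i, w i * b i ≤ ∑' i, w i * α :=
        Summable.tsum_le_tsum (fun i => mul_le_mul_of_nonneg_left (hbα i) (hw0 i))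
          (summable_mul_of_le hw0 hw1 hb0 hbα) (hw1.summable.mul_right α)
    _ = α := by rw [(hw1.mul_right α).tsum_eq, one_mul]

end Weights

theorem stmt4_general {X : Type*} (v : X → ℝ) (hv : ∀ x, 0 < v x)
    (T : (X → ℝ) → (X → ℝ)) (α : ℝ) (hα : α ∈ Set.Ioo (0 : ℝ) 1)
    (hT : ∀ J, memB v J → memB v (T J))
    (hcontr : ∀ J J', memB v J → memB v J' →
      wnorm v (fun x => T J x - T J' x) ≤ α * wnorm v (fun x => J x - J' x))
    (JT : X → ℝ) (hJT : memB v JT) (hfix : T JT = JT)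
    (w : ℕ → X → ℝ) (hw0 : ∀ ℓ x, 0 ≤ w ℓ x)
    (hw1 : ∀ x, HasSum (fun ℓ : ℕ => w ℓ x) 1)
    (J : X → ℝ) (hJ : memB v J) :
    (⨆ x, ∑' ℓ : ℕ, w ℓ x * α ^ (ℓ + 1)) ≤ α ∧
    memB v (fun x => ∑' ℓ : ℕ, w ℓ x * (T^[ℓ + 1] J) x) ∧
    ∀ x, |(∑' ℓ : ℕ, w ℓ x * (T^[ℓ + 1] J) x) - JT x| ≤
      (⨆ y, ∑' ℓ : ℕ, w ℓ y * α ^ (ℓ + 1)) *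
        wnorm v (fun y => J y - JT y) * v x := by
  obtain ⟨hα0, hα1⟩ := hα
  have hpow0 : ∀ ℓ : ℕ, 0 ≤ α ^ (ℓ + 1) := fun ℓ => pow_nonneg hα0.le _
  have hpowα : ∀ ℓ : ℕ, α ^ (ℓ + 1) ≤ α := fun ℓ => pow_le_of_le_one hα0.le hα1.le (by omega)
  have hαbar : ∀ x, ∑' ℓ : ℕ, w ℓ x * α ^ (ℓ + 1) ≤ α := fun x =>
    tsum_mul_le_of_le (hw0 · x) (hw1 x) hpow0 hpowα
  set N := wnorm v (fun y => J y - JT y)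
  have hest : ∀ x, |(∑' ℓ : ℕ, w ℓ x * (T^[ℓ + 1] J) x) - JT x| ≤
      (⨆ y, ∑' ℓ : ℕ, w ℓ y * α ^ (ℓ + 1)) * N * v x := fun x =>
    calc |(∑' ℓ : ℕ, w ℓ x * (T^[ℓ + 1] J) x) - JT x|
        ≤ ∑' ℓ : ℕ, w ℓ x * (α ^ (ℓ + 1) * (N * v x)) :=
          abs_tsum_mul_sub_le (hw0 · x) (hw1 x)
            (by simpa only [mul_assoc] using
              (summable_mul_of_le (hw0 · x) (hw1 x) hpow0 hpowα).mul_right (N * v x))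
            fun ℓ => abs_iterate_sub_fixedPoint_le hv hα0.le hT hcontr hJT hfix hJ (ℓ + 1) x
      _ = (∑' ℓ : ℕ, w ℓ x * α ^ (ℓ + 1)) * (N * v x) := by
          rw [← tsum_mul_right]; simp only [mul_assoc]
      _ ≤ (⨆ y, ∑' ℓ : ℕ, w ℓ y * α ^ (ℓ + 1)) * (N * v x) :=
          mul_le_mul_of_nonneg_right (le_ciSup ⟨α, by rintro _ ⟨y, rfl⟩; exact hαbar y⟩ x)
            (mul_nonneg (wnorm_nonneg (fun y => (hv y).le) _) (hv x).le)
      _ = _ := (mul_assoc _ _ _).symm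
  exact ⟨Real.iSup_le hαbar hα0.le, hJT.of_abs_sub_le hv hest, hest⟩

/-- the multistep operator `T^{(w)}` maps `𝓑(X)` into `𝓑(X)`, with
`|(T^{(w)}J)(x) - J_T(x)| ≤ ᾱ ‖J - J_T‖ v(x)` where
`ᾱ = ⨆ x, ∑_ℓ w_ℓ(x) α^ℓ ≤ α`.  (Here `w ℓ` stands for `w_{ℓ+1}`.) -/
theorem stmt4 {X : Type*} [Nonempty X] (v : X → ℝ) (hv : ∀ x, 0 < v x)
    (T : (X → ℝ) → (X → ℝ)) (α : ℝ) (hα : α ∈ Set.Ioo (0 : ℝ) 1)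
    (hT : ∀ J, memB v J → memB v (T J))
    (hcontr : ∀ J J', memB v J → memB v J' →
      wnorm v (fun x => T J x - T J' x) ≤ α * wnorm v (fun x => J x - J' x))
    (JT : X → ℝ) (hJT : memB v JT) (hfix : T JT = JT)
    (w : ℕ → X → ℝ) (hw0 : ∀ ℓ x, 0 ≤ w ℓ x)
    (hw1 : ∀ x, HasSum (fun ℓ : ℕ => w ℓ x) 1)
    (J : X → ℝ) (hJ : memB v J) :
    (⨆ x, ∑' ℓ : ℕ, w ℓ x * α ^ (ℓ + 1)) ≤ α ∧
    memB v (fun x => ∑' ℓ : ℕ, w ℓ x * (T^[ℓ + 1] J) x) ∧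
    ∀ x, |(∑' ℓ : ℕ, w ℓ x * (T^[ℓ + 1] J) x) - JT x| ≤
      (⨆ y, ∑' ℓ : ℕ, w ℓ y * α ^ (ℓ + 1)) *
        wnorm v (fun y => J y - JT y) * v x :=
  stmt4_general v hv T α hα hT hcontr JT hJT hfix w hw0 hw1 J hJ
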